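/- Let (φ, (t_u)_{u∈𝔞*}) be a representation of X on a C*-algebra A. Then for every w ∈ 𝔞* and every f ∈ D_X: φ(λ_w(f)) = t_w* φ(f) t_w, and t_w* φ(f) = φ(λ_w(f)) t_w*. -/

import Mathlib

open scoped ENNReal
open Classical
set_option linter.unusedSectionVars false
set_option synthInstance.maxHeartbeats 1000000
set_option maxHeartbeats 1000000

noncomputable section

variable {𝔞 : Type*} [Fintype 𝔞] [Nonempty 𝔞] [TopologicalSpace 𝔞] [DiscreteTopology 𝔞]

/-- The one-sided shift map on the full one-sided shift `𝔞^ℕ`. -/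
def shift (x : ℕ → 𝔞) : ℕ → 𝔞 := fun n => x (n + 1)

/-- Concatenation `u x` of a finite word `u` with an infinite sequence `x`. -/
def wcat (u : List 𝔞) (x : ℕ → 𝔞) : ℕ → 𝔞 := fun n =>
  if h : n < u.length then u.get ⟨n, h⟩ else x (n - u.length)

/-- `l∞(X)`: the C*-algebra of bounded complex-valued functions on `X`,
with pointwise operations and the supremum norm. -/
abbrev Linf (X : Set (ℕ → 𝔞)) : Type _ := lp (fun _ : X => ℂ) ∞

/-- The set `C(u,v) = {vx : x ∈ X, vx ∈ X, ux ∈ X}`. -/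
def cyl (X : Set (ℕ → 𝔞)) (u v : List 𝔞) : Set (ℕ → 𝔞) :=
  {y | ∃ x, x ∈ X ∧ wcat u x ∈ X ∧ wcat v x ∈ X ∧ y = wcat v x}

/-- The indicator function of a subset `S`, as an element of `l∞(X)`. -/
def chi (X S : Set (ℕ → 𝔞)) : Linf X :=
  ⟨fun x => S.indicator (fun _ => (1 : ℂ)) (x : ℕ → 𝔞),
    memℓp_infty ⟨1, by
      rintro r ⟨x, rfl⟩
      by_cases h : (x : ℕ → 𝔞) ∈ S <;> simp [Set.indicator_apply, h]⟩⟩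

/-- `D_X`: the smallest C*-subalgebra (norm-closed, star-closed subalgebra) of `l∞(X)`
containing the indicator functions `χ_{C(u,v)}` for all words `u, v`. -/
def Dalg (X : Set (ℕ → 𝔞)) : NonUnitalStarSubalgebra ℂ (Linf X) :=
  (NonUnitalStarAlgebra.adjoin ℂ
    {f : Linf X | ∃ u v : List 𝔞, f = chi X (cyl X u v)}).topologicalClosure

lemma chi_cyl_mem_Dalg (X : Set (ℕ → 𝔞)) (u v : List 𝔞) : chi X (cyl X u v) ∈ Dalg X :=
  (NonUnitalStarAlgebra.adjoin ℂ _).le_topologicalClosure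
    (NonUnitalStarAlgebra.subset_adjoin ℂ _ ⟨u, v, rfl⟩)

/-- The map `λ_w : l∞(X) → l∞(X)`, `λ_w(f)(x) = f(wx)` if `wx ∈ X`, and `0` otherwise. -/
def lambdaMap (X : Set (ℕ → 𝔞)) (w : List 𝔞) (f : Linf X) : Linf X :=
  ⟨fun x => if h : wcat w (x : ℕ → 𝔞) ∈ X then f ⟨wcat w (x : ℕ → 𝔞), h⟩ else 0,
    memℓp_infty ⟨‖f‖, by
      rintro r ⟨x, rfl⟩
      dsimp only
      split_ifs with h
      · exact lp.norm_apply_le_norm ENNReal.top_ne_zero f _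
      · rw [norm_zero]; exact norm_nonneg f⟩⟩

/-!
Each `t_v` is a partial isometry: `φ(χ_{C(v,v)}) = (t_v t_v*)²` is a projection, and a positive
element whose square is a projection is itself one. For a generator `χ_{C(u,v)}` the set
`{x | wx ∈ C(u,v)}` is `C(u,v') ∩ C(w,ε)` if `v = wv'`, is `C(uw',ε) ∩ C(vw',ε)` if `w = vw'`, and
is empty otherwise; in the last case the range projections of `t_v` and `t_w` are orthogonal, so
`t_w* t_v = 0`. Since `D_X` is commutative, this gives `t_w* φ(f) = φ(λ_w f) t_w*` on generators.
The `f` satisfying it and also `φ(f) t_w = t_w φ(λ_w f)` form a closed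
*-subalgebra, hence all of `D_X`. Finally `λ_w f = λ_w f · χ_{C(w,ε)}` and
`φ(χ_{C(w,ε)}) = t_w* t_w` give `φ(λ_w f) = t_w* φ(f) t_w`.
-/

section CStarAlgebra

variable {A : Type*}

theorem IsIdempotentElem.of_mul_self_of_nonneg [NonUnitalCStarAlgebra A] [PartialOrder A]
    [StarOrderedRing A] {p : A} (hp : 0 ≤ p) (h : IsIdempotentElem (p * p)) :
    IsIdempotentElem p := by
  have hpp : 0 ≤ p * p := by simpa [hp.isSelfAdjoint.star_eq] using star_mul_self_nonneg p
  calc p * p = CFC.sqrt (p * p * (p * p)) := (CFC.sqrt_mul_self (p * p) hpp).symm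
    _ = CFC.sqrt (p * p) := by rw [h.eq]
    _ = p := CFC.sqrt_mul_self p hp

variable [NonUnitalNormedRing A] [StarRing A] [CStarRing A]

theorem mul_star_mul_self_of_isIdempotentElem {s : A} (h : IsIdempotentElem (s * star s)) :
    s * star s * s = s := by
  have hd : (s * star s * s - s) * star (s * star s * s - s) =
      s * star s * (s * star s) * (s * star s) - s * star s * (s * star s)
        - s * star s * (s * star s) + s * star s := by
    simp only [star_sub, star_mul, star_star]; noncomm_ring
  rw [h.eq, h.eq, sub_self, zero_sub, neg_add_cancel, CStarRing.mul_star_self_eq_zero_iff] at hd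
  exact sub_eq_zero.mp hd

theorem isSelfAdjoint_of_isIdempotentElem_of_mul_star_mul_self {e : A} (he : IsIdempotentElem e)
    (hpi : e * star e * e = e) : IsSelfAdjoint e := by
  have hd : (e - e * star e) * star (e - e * star e) =
      e * star e - e * e * star e - e * star (e * e) + e * star e * e * star e := by
    simp only [star_sub, star_mul, star_star]; noncomm_ring
  rw [he.eq, hpi, sub_self, zero_sub, neg_add_cancel, CStarRing.mul_star_self_eq_zero_iff,
    sub_eq_zero] at hd
  rw [hd]
  exact IsSelfAdjoint.mul_star_self e

end CStarAlgebra

section Intertwining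

variable {R B A : Type*} [CommSemiring R]
  [NonUnitalSemiring B] [StarRing B] [Module R B]
  [NonUnitalSemiring A] [StarRing A] [Module R A] [IsScalarTower R A A] [SMulCommClass R A A]

/-- The second condition is the adjoint of the first one at `star b`; it makes the carrier closed
under `star`. -/
def intertwiningSubalgebra (ψ₁ ψ₂ : B →⋆ₙₐ[R] A) (s : A) : NonUnitalStarSubalgebra R B where
  carrier := {b | s * ψ₁ b = ψ₂ b * s ∧ ψ₁ b * star s = star s * ψ₂ b}
  zero_mem' := by simp
  add_mem' := by
    rintro a b ⟨ha, ha'⟩ ⟨hb, hb'⟩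
    simp only [Set.mem_ofPred_eq, map_add, mul_add, add_mul, ha, hb, ha', hb', and_self]
  mul_mem' := by
    rintro a b ⟨ha, ha'⟩ ⟨hb, hb'⟩
    simp only [Set.mem_ofPred_eq, map_mul]
    constructor
    · rw [← mul_assoc, ha, mul_assoc, hb, mul_assoc]
    · rw [mul_assoc, hb', ← mul_assoc, ha', mul_assoc]
  smul_mem' := by
    rintro r b ⟨hb, hb'⟩
    simp only [Set.mem_ofPred_eq, map_smul, mul_smul_comm, smul_mul_assoc, hb, hb', and_self]
  star_mem' := by
    rintro b ⟨hb, hb'⟩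
    simp only [Set.mem_ofPred_eq, map_star]
    constructor
    · simpa only [star_mul, star_star] using congrArg star hb'
    · simpa only [star_mul] using congrArg star hb

theorem isClosed_intertwiningSubalgebra [TopologicalSpace B] [TopologicalSpace A] [ContinuousMul A]
    [T2Space A] {ψ₁ ψ₂ : B →⋆ₙₐ[R] A} (hψ₁ : Continuous ψ₁) (hψ₂ : Continuous ψ₂) (s : A) :
    IsClosed (intertwiningSubalgebra ψ₁ ψ₂ s : Set B) :=
  (isClosed_eq (continuous_const.mul hψ₁) (hψ₂.mul continuous_const)).inter
    (isClosed_eq (hψ₁.mul continuous_const) (continuous_const.mul hψ₂))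

end Intertwining

section ShiftSpace

variable {𝔞 : Type*} {X : Set (ℕ → 𝔞)}

@[simp]
theorem wcat_nil (x : ℕ → 𝔞) : wcat [] x = x := by
  funext n; simp [wcat]

theorem wcat_apply_of_lt (u : List 𝔞) (x : ℕ → 𝔞) {n : ℕ} (h : n < u.length) :
    wcat u x n = u[n] := dif_pos h

theorem wcat_apply_add_length (u : List 𝔞) (x : ℕ → 𝔞) (n : ℕ) :
    wcat u x (u.length + n) = x n := by
  simp [wcat]

theorem wcat_append (u v : List 𝔞) (x : ℕ → 𝔞) : wcat (u ++ v) x = wcat u (wcat v x) := by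
  funext n
  simp only [wcat, List.length_append, List.get_eq_getElem]
  by_cases h₁ : n < u.length
  · simp [h₁, List.getElem_append_left h₁, Nat.lt_add_right]
  by_cases h₂ : n < u.length + v.length
  · simp [h₁, h₂, List.getElem_append_right (Nat.le_of_not_lt h₁),
      show n - u.length < v.length by omega]
  · simp only [h₁, h₂, dite_false, show ¬ n - u.length < v.length by omega, Nat.sub_sub]

theorem shift_wcat_cons (a : 𝔞) (u : List 𝔞) (x : ℕ → 𝔞) :
    shift (wcat (a :: u) x) = wcat u x := by
  funext n
  simp [shift, wcat]

theorem wcat_right_injective (u : List 𝔞) : Function.Injective (wcat u) := fun x y h => by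
  funext n
  simpa only [wcat_apply_add_length] using congrFun h (u.length + n)

theorem mem_of_wcat_mem (hX : ∀ x ∈ X, shift x ∈ X) :
    ∀ {u : List 𝔞} {x : ℕ → 𝔞}, wcat u x ∈ X → x ∈ X
  | [], _, h => by rwa [wcat_nil] at h
  | a :: u, x, h => mem_of_wcat_mem hX (by simpa only [shift_wcat_cons] using hX _ h)

theorem prefix_of_wcat_eq {w v : List 𝔞} {x y : ℕ → 𝔞} (h : wcat w x = wcat v y)
    (hl : w.length ≤ v.length) : w <+: v := by
  rw [List.prefix_iff_eq_take]
  refine List.ext_getElem (by simp [hl]) fun i hw _ => ?_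
  have := congrFun h i
  rw [wcat_apply_of_lt w x hw, wcat_apply_of_lt v y (by omega)] at this
  simpa only [List.getElem_take] using this

theorem prefix_or_prefix_of_wcat_eq {w v : List 𝔞} {x y : ℕ → 𝔞} (h : wcat w x = wcat v y) :
    w <+: v ∨ v <+: w :=
  (le_total w.length v.length).imp (prefix_of_wcat_eq h) (prefix_of_wcat_eq h.symm)

theorem cyl_subset (u v : List 𝔞) : cyl X u v ⊆ X := by
  rintro _ ⟨x, -, -, hvx, rfl⟩
  exact hvx

theorem mem_cyl_nil {w : List 𝔞} {z : ℕ → 𝔞} : z ∈ cyl X w [] ↔ z ∈ X ∧ wcat w z ∈ X := by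
  simp only [cyl, wcat_nil]
  constructor
  · rintro ⟨x, hx, hwx, -, rfl⟩
    exact ⟨hx, hwx⟩
  · rintro ⟨hz, hwz⟩
    exact ⟨z, hz, hwz, hz, rfl⟩

theorem wcat_mem_cyl_append_iff (hX : ∀ x ∈ X, shift x ∈ X) (u v w : List 𝔞) (z : ℕ → 𝔞) :
    wcat w z ∈ cyl X u (w ++ v) ↔ z ∈ cyl X u v ∩ cyl X w [] := by
  rw [Set.mem_inter_iff, mem_cyl_nil]
  simp only [cyl, wcat_append]
  constructor
  · rintro ⟨x, hx, hux, hwvx, he⟩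
    obtain rfl := wcat_right_injective w he
    exact ⟨⟨x, hx, hux, mem_of_wcat_mem hX hwvx, rfl⟩, mem_of_wcat_mem hX hwvx, hwvx⟩
  · rintro ⟨⟨x, hx, hux, -, rfl⟩, -, hwvx⟩
    exact ⟨x, hx, hux, hwvx, rfl⟩

theorem wcat_append_mem_cyl_iff (hX : ∀ x ∈ X, shift x ∈ X) (u v w : List 𝔞) (z : ℕ → 𝔞) :
    wcat (v ++ w) z ∈ cyl X u v ↔ z ∈ cyl X (u ++ w) [] ∩ cyl X (v ++ w) [] := by
  rw [Set.mem_inter_iff, mem_cyl_nil, mem_cyl_nil]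
  simp only [cyl, wcat_append]
  constructor
  · rintro ⟨x, -, hux, hvx, he⟩
    obtain rfl := (wcat_right_injective v he).symm
    have hz := mem_of_wcat_mem hX (mem_of_wcat_mem hX hvx)
    exact ⟨⟨hz, hux⟩, hz, hvx⟩
  · rintro ⟨⟨-, huwz⟩, -, hvwz⟩
    exact ⟨wcat w z, mem_of_wcat_mem hX hvwz, huwz, hvwz, rfl⟩

theorem wcat_notMem_cyl {v w : List 𝔞} (hwv : ¬ w <+: v) (hvw : ¬ v <+: w) (u : List 𝔞)
    (z : ℕ → 𝔞) : wcat w z ∉ cyl X u v := by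
  rintro ⟨x, -, -, -, he⟩
  exact (prefix_or_prefix_of_wcat_eq he).elim hwv hvw

theorem cyl_self_inter_cyl_self_eq_empty {v w : List 𝔞} (hwv : ¬ w <+: v) (hvw : ¬ v <+: w) :
    cyl X w w ∩ cyl X v v = ∅ := by
  refine Set.eq_empty_of_forall_notMem ?_
  rintro _ ⟨⟨x, -, -, -, rfl⟩, hv⟩
  exact wcat_notMem_cyl hwv hvw v x hv

theorem chi_apply (S : Set (ℕ → 𝔞)) (x : X) :
    chi X S x = if (x : ℕ → 𝔞) ∈ S then 1 else 0 := by
  simp [chi, Set.indicator_apply]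

theorem lambdaMap_apply (w : List 𝔞) (f : Linf X) (x : X) :
    lambdaMap X w f x = if h : wcat w (x : ℕ → 𝔞) ∈ X then f ⟨wcat w x, h⟩ else 0 := rfl

theorem chi_mul (S T : Set (ℕ → 𝔞)) : chi X S * chi X T = chi X (S ∩ T) := by
  ext x
  simp only [lp.infty_coeFn_mul, Pi.mul_apply, chi_apply, Set.mem_inter_iff, ite_zero_mul_ite_zero,
    mul_one]

theorem star_chi (S : Set (ℕ → 𝔞)) : star (chi X S) = chi X S := by
  ext x
  simp only [lp.coeFn_star, Pi.star_apply, chi_apply]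
  split_ifs <;> simp

theorem chi_empty : chi X ∅ = 0 := by
  ext x
  simp [chi_apply]

theorem lambdaMap_chi {S : Set (ℕ → 𝔞)} (hS : S ⊆ X) (w : List 𝔞) :
    lambdaMap X w (chi X S) = chi X (wcat w ⁻¹' S) := by
  ext x
  rw [lambdaMap_apply, chi_apply, Set.mem_preimage]
  split_ifs with hX hS' hS' <;> simp_all [chi_apply]
  exact hX (hS hS')

theorem lambdaMap_mul_chi_cyl_nil (w : List 𝔞) (f : Linf X) :
    lambdaMap X w f * chi X (cyl X w []) = lambdaMap X w f := by
  ext x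
  rw [lp.infty_coeFn_mul, Pi.mul_apply, chi_apply, mem_cyl_nil, lambdaMap_apply]
  split_ifs <;> simp_all

theorem lambdaMap_chi_cyl_append (hX : ∀ x ∈ X, shift x ∈ X) (u v w : List 𝔞) :
    lambdaMap X w (chi X (cyl X u (w ++ v))) = chi X (cyl X u v) * chi X (cyl X w []) := by
  rw [lambdaMap_chi (cyl_subset _ _), chi_mul]
  exact congrArg (chi X) (Set.ext (wcat_mem_cyl_append_iff hX u v w))

theorem lambdaMap_append_chi_cyl (hX : ∀ x ∈ X, shift x ∈ X) (u v w : List 𝔞) :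
    lambdaMap X (v ++ w) (chi X (cyl X u v)) =
      chi X (cyl X (u ++ w) []) * chi X (cyl X (v ++ w) []) := by
  rw [lambdaMap_chi (cyl_subset _ _), chi_mul]
  exact congrArg (chi X) (Set.ext (wcat_append_mem_cyl_iff hX u v w))

theorem lambdaMap_chi_cyl_eq_zero {v w : List 𝔞} (hwv : ¬ w <+: v) (hvw : ¬ v <+: w)
    (u : List 𝔞) : lambdaMap X w (chi X (cyl X u v)) = 0 := by
  rw [lambdaMap_chi (cyl_subset _ _), ← chi_empty]
  exact congrArg (chi X) (Set.eq_empty_of_forall_notMem (wcat_notMem_cyl hwv hvw u))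

variable (X) in
def lambdaHom (w : List 𝔞) : Linf X →⋆ₙₐ[ℂ] Linf X where
  toFun := lambdaMap X w
  map_smul' c f := by
    ext x; by_cases h : wcat w (x : ℕ → 𝔞) ∈ X <;> simp [lambdaMap_apply, h]
  map_zero' := by
    ext x; by_cases h : wcat w (x : ℕ → 𝔞) ∈ X <;> simp [lambdaMap_apply, h]
  map_add' f g := by
    ext x; by_cases h : wcat w (x : ℕ → 𝔞) ∈ X <;> simp [lambdaMap_apply, h]
  map_mul' f g := by
    ext x; by_cases h : wcat w (x : ℕ → 𝔞) ∈ X <;> simp [lambdaMap_apply, h]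
  map_star' f := by
    ext x; by_cases h : wcat w (x : ℕ → 𝔞) ∈ X <;> simp [lambdaMap_apply, h]

instance isClosed_Dalg : IsClosed (Dalg X : Set (Linf X)) :=
  NonUnitalStarSubalgebra.isClosed_topologicalClosure _

variable (X) in
def chiCyl (u v : List 𝔞) : Dalg X :=
  ⟨chi X (cyl X u v), (NonUnitalStarAlgebra.adjoin ℂ _).le_topologicalClosure
    (NonUnitalStarAlgebra.subset_adjoin ℂ _ ⟨u, v, rfl⟩)⟩

theorem isSelfAdjoint_chiCyl (u v : List 𝔞) : IsSelfAdjoint (chiCyl X u v) :=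
  Subtype.ext (star_chi _)

theorem isIdempotentElem_chiCyl (u v : List 𝔞) : IsIdempotentElem (chiCyl X u v) :=
  Subtype.ext <| (chi_mul _ _).trans (congrArg (chi X) (Set.inter_self _))

theorem chiCyl_self_mul_chiCyl_self {v w : List 𝔞} (hwv : ¬ w <+: v) (hvw : ¬ v <+: w) :
    chiCyl X w w * chiCyl X v v = 0 :=
  Subtype.ext <| (chi_mul _ _).trans <| by
    rw [cyl_self_inter_cyl_self_eq_empty hwv hvw, chi_empty]; rfl

theorem mem_of_isClosed_of_chiCyl_mem {S : NonUnitalStarSubalgebra ℂ (Dalg X)}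
    (hS : IsClosed (S : Set (Dalg X))) (h : ∀ u v, chiCyl X u v ∈ S) (f : Dalg X) : f ∈ S := by
  set T := S.map (NonUnitalStarSubalgebraClass.subtype (Dalg X))
  have hT : IsClosed (T : Set (Linf X)) :=
    isClosed_Dalg.isClosedEmbedding_subtypeVal.isClosedMap _ hS
  have hDT : Dalg X ≤ T :=
    NonUnitalStarSubalgebra.topologicalClosure_minimal _
      (NonUnitalStarAlgebra.adjoin_le (by rintro _ ⟨u, v, rfl⟩; exact ⟨_, h u v, rfl⟩)) hT
  obtain ⟨g, hg, hgf⟩ := hDT f.2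
  rwa [← Subtype.ext hgf]

variable (X) in
def lambdaDalg (w : List 𝔞) (hw : ∀ f ∈ Dalg X, lambdaMap X w f ∈ Dalg X) :
    Dalg X →⋆ₙₐ[ℂ] Dalg X :=
  NonUnitalStarAlgHom.codRestrict
    ((lambdaHom X w).comp (NonUnitalStarSubalgebraClass.subtype (Dalg X))) _ fun f => hw f f.2

theorem lambdaDalg_mul_chiCyl_nil {w : List 𝔞} (hw : ∀ f ∈ Dalg X, lambdaMap X w f ∈ Dalg X)
    (f : Dalg X) : lambdaDalg X w hw f * chiCyl X w [] = lambdaDalg X w hw f :=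
  Subtype.ext (lambdaMap_mul_chi_cyl_nil w (f : Linf X))

end ShiftSpace

section Representation

variable {𝔞 : Type*} {X : Set (ℕ → 𝔞)} {A : Type*}

structure IsRepresentation [NonUnitalNonAssocSemiring A] [Module ℂ A] [Star A]
    (φ : Dalg X →⋆ₙₐ[ℂ] A) (t : List 𝔞 → A) : Prop where
  mul_eq : ∀ u v, t u * t v = t (u ++ v)
  apply_chiCyl : ∀ u v, φ (chiCyl X u v) = t v * star (t u) * (t u * star (t v))

namespace IsRepresentation

variable [CStarAlgebra A] {φ : Dalg X →⋆ₙₐ[ℂ] A} {t : List 𝔞 → A} (hφ : IsRepresentation φ t)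
include hφ

theorem isIdempotentElem_mul_star (v : List 𝔞) : IsIdempotentElem (t v * star (t v)) := by
  let := CStarAlgebra.spectralOrder A
  have := CStarAlgebra.spectralOrderedRing A
  refine IsIdempotentElem.of_mul_self_of_nonneg (mul_star_self_nonneg _) ?_
  rw [← hφ.apply_chiCyl]
  exact (isIdempotentElem_chiCyl v v).map φ

theorem apply_chiCyl_self (v : List 𝔞) : φ (chiCyl X v v) = t v * star (t v) := by
  rw [hφ.apply_chiCyl, (hφ.isIdempotentElem_mul_star v).eq]

theorem mul_star_mul_self (v : List 𝔞) : t v * star (t v) * t v = t v :=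
  mul_star_mul_self_of_isIdempotentElem (hφ.isIdempotentElem_mul_star v)

theorem star_mul_self_mul_star (v : List 𝔞) : star (t v) * t v * star (t v) = star (t v) := by
  simpa only [star_mul, star_star, mul_assoc] using congrArg star (hφ.mul_star_mul_self v)

theorem isSelfAdjoint_nil : IsSelfAdjoint (t []) :=
  isSelfAdjoint_of_isIdempotentElem_of_mul_star_mul_self (hφ.mul_eq [] [])
    (hφ.mul_star_mul_self [])

theorem apply_chiCyl_nil (u : List 𝔞) : φ (chiCyl X u []) = star (t u) * t u := by
  have h : t u * star (t []) = t u := by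
    rw [hφ.isSelfAdjoint_nil.star_eq, hφ.mul_eq, List.append_nil]
  rw [hφ.apply_chiCyl, h, ← star_star (t []), ← star_mul, h]

theorem star_mul_eq_zero {v w : List 𝔞} (hwv : ¬ w <+: v) (hvw : ¬ v <+: w) :
    star (t w) * t v = 0 := by
  have h : t w * star (t w) * (t v * star (t v)) = 0 := by
    rw [← hφ.apply_chiCyl_self, ← hφ.apply_chiCyl_self, ← map_mul,
      chiCyl_self_mul_chiCyl_self hwv hvw, map_zero]
  calc star (t w) * t v = star (t w) * t w * star (t w) * (t v * star (t v) * t v) := by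
        rw [hφ.star_mul_self_mul_star, hφ.mul_star_mul_self]
    _ = star (t w) * (t w * star (t w) * (t v * star (t v))) * t v := by noncomm_ring
    _ = 0 := by rw [h, mul_zero, zero_mul]

variable (hX : ∀ x ∈ X, shift x ∈ X)
include hX

theorem star_mul_apply_chiCyl_append {w : List 𝔞}
    (hw : ∀ f ∈ Dalg X, lambdaMap X w f ∈ Dalg X) (u v : List 𝔞) :
    star (t w) * φ (chiCyl X u (w ++ v)) =
      φ (lambdaDalg X w hw (chiCyl X u (w ++ v))) * star (t w) := by
  have hΛ : lambdaDalg X w hw (chiCyl X u (w ++ v)) = chiCyl X u v * chiCyl X w [] :=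
    Subtype.ext (lambdaMap_chi_cyl_append hX u v w)
  have hcomm := (Commute.all (chiCyl X w []) (chiCyl X u v)).map φ
  rw [hφ.apply_chiCyl_nil] at hcomm
  calc star (t w) * φ (chiCyl X u (w ++ v))
      = star (t w) * t w * φ (chiCyl X u v) * star (t w) := by
        rw [hφ.apply_chiCyl, hφ.apply_chiCyl, ← hφ.mul_eq, star_mul]; noncomm_ring
    _ = φ (lambdaDalg X w hw (chiCyl X u (w ++ v))) * star (t w) := by
        rw [hcomm.eq, hΛ, map_mul, hφ.apply_chiCyl_nil, mul_assoc]

theorem star_append_mul_apply_chiCyl {v w : List 𝔞}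
    (hw : ∀ f ∈ Dalg X, lambdaMap X (v ++ w) f ∈ Dalg X) (u : List 𝔞) :
    star (t (v ++ w)) * φ (chiCyl X u v) =
      φ (lambdaDalg X (v ++ w) hw (chiCyl X u v)) * star (t (v ++ w)) := by
  have hΛ : lambdaDalg X (v ++ w) hw (chiCyl X u v) =
      chiCyl X (u ++ w) [] * chiCyl X (v ++ w) [] :=
    Subtype.ext (lambdaMap_append_chi_cyl hX u v w)
  have hvu := (Commute.all (chiCyl X v []) (chiCyl X u [])).map φ
  have hwu := (Commute.all (chiCyl X w w) (chiCyl X u [])).map φ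
  rw [hφ.apply_chiCyl_nil, hφ.apply_chiCyl_nil] at hvu
  rw [hφ.apply_chiCyl_self, hφ.apply_chiCyl_nil] at hwu
  calc star (t (v ++ w)) * φ (chiCyl X u v)
      = star (t w) * (star (t v) * t v * (star (t u) * t u)) * star (t v) := by
        rw [hφ.apply_chiCyl, ← hφ.mul_eq, star_mul]; noncomm_ring
    _ = star (t w) * (star (t u) * t u) * star (t v) := by
        rw [hvu.eq, mul_assoc (star (t w)), mul_assoc (star (t u) * t u),
          hφ.star_mul_self_mul_star, ← mul_assoc]
    _ = star (t w) * t w * star (t w) * (star (t u) * t u) * star (t v) := by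
        rw [hφ.star_mul_self_mul_star]
    _ = star (t w) * (star (t u) * t u * (t w * star (t w))) * star (t v) := by
        rw [← hwu.eq]; noncomm_ring
    _ = star (t (u ++ w)) * t (u ++ w) * star (t (v ++ w)) := by
        rw [← hφ.mul_eq, ← hφ.mul_eq, star_mul, star_mul]; noncomm_ring
    _ = φ (lambdaDalg X (v ++ w) hw (chiCyl X u v)) * star (t (v ++ w)) := by
        rw [hΛ, map_mul, hφ.apply_chiCyl_nil, hφ.apply_chiCyl_nil,
          mul_assoc (star (t (u ++ w)) * t (u ++ w)), hφ.star_mul_self_mul_star]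

theorem star_mul_apply_chiCyl {w : List 𝔞} (hw : ∀ f ∈ Dalg X, lambdaMap X w f ∈ Dalg X)
    (u v : List 𝔞) :
    star (t w) * φ (chiCyl X u v) = φ (lambdaDalg X w hw (chiCyl X u v)) * star (t w) := by
  by_cases hwv : w <+: v
  · obtain ⟨v, rfl⟩ := hwv
    exact hφ.star_mul_apply_chiCyl_append hX hw u v
  by_cases hvw : v <+: w
  · obtain ⟨w, rfl⟩ := hvw
    exact hφ.star_append_mul_apply_chiCyl hX hw u
  have hΛ : lambdaDalg X w hw (chiCyl X u v) = 0 :=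
    Subtype.ext (lambdaMap_chi_cyl_eq_zero hwv hvw u)
  rw [hΛ, map_zero, zero_mul, hφ.apply_chiCyl]
  simp only [← mul_assoc, hφ.star_mul_eq_zero hwv hvw, zero_mul]

theorem chiCyl_mem_intertwiningSubalgebra {w : List 𝔞}
    (hw : ∀ f ∈ Dalg X, lambdaMap X w f ∈ Dalg X) (u v : List 𝔞) :
    chiCyl X u v ∈ intertwiningSubalgebra φ (φ.comp (lambdaDalg X w hw)) (star (t w)) := by
  have h := hφ.star_mul_apply_chiCyl hX hw u v
  refine ⟨h, ?_⟩
  simpa only [star_mul, star_star, ← map_star, (isSelfAdjoint_chiCyl u v).star_eq,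
    NonUnitalStarAlgHom.comp_apply]
    using congrArg star h

end IsRepresentation

end Representation

theorem rep_lambdaMap_general (X : Set (ℕ → 𝔞))
    (hXinv : ∀ x ∈ X, shift x ∈ X)
    {A : Type*} [NormedRing A] [StarRing A] [CStarRing A] [NormedAlgebra ℂ A]
    [StarModule ℂ A] [CompleteSpace A]
    (φ : Dalg X →⋆ₙₐ[ℂ] A) (t : List 𝔞 → A)
    (hmul : ∀ u v : List 𝔞, t u * t v = t (u ++ v))
    (hrep : ∀ u v : List 𝔞,
      φ ⟨chi X (cyl X u v), chi_cyl_mem_Dalg X u v⟩ = t v * star (t u) * (t u * star (t v)))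
    (hlam : ∀ (w : List 𝔞) (f : Linf X), f ∈ Dalg X → lambdaMap X w f ∈ Dalg X)
    (w : List 𝔞) (f : Dalg X) :
    φ ⟨lambdaMap X w (f : Linf X), hlam w f f.2⟩ = star (t w) * φ f * t w ∧
    star (t w) * φ f = φ ⟨lambdaMap X w (f : Linf X), hlam w f f.2⟩ * star (t w) := by
  let : CStarAlgebra A := { }
  have hφ : IsRepresentation φ t := ⟨hmul, hrep⟩
  have hf : f ∈ intertwiningSubalgebra φ (φ.comp (lambdaDalg X w (hlam w))) (star (t w)) :=
    open scoped CStarAlgebra in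
    mem_of_isClosed_of_chiCyl_mem
      (isClosed_intertwiningSubalgebra (map_continuous φ) (map_continuous _) _)
      (hφ.chiCyl_mem_intertwiningSubalgebra hXinv (hlam w)) f
  have hf' : star (t w) * φ f = φ (lambdaDalg X w (hlam w) f) * star (t w) := hf.1
  refine ⟨?_, hf'⟩
  calc φ (lambdaDalg X w (hlam w) f)
      = φ (lambdaDalg X w (hlam w) f) * (star (t w) * t w) := by
        rw [← hφ.apply_chiCyl_nil, ← map_mul, lambdaDalg_mul_chiCyl_nil]
    _ = star (t w) * φ f * t w := by
        rw [← mul_assoc, hf']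

/-- for a representation `(φ, (t_u)_u)` of `X` on a C*-algebra `A`,
every `w ∈ 𝔞*` and every `f ∈ D_X`: `φ(λ_w(f)) = t_w* φ(f) t_w` and
`t_w* φ(f) = φ(λ_w(f)) t_w*`. -/
theorem rep_lambdaMap (X : Set (ℕ → 𝔞)) (hXclosed : IsClosed X)
    (hXinv : ∀ x ∈ X, shift x ∈ X)
    {A : Type*} [NormedRing A] [StarRing A] [CStarRing A] [NormedAlgebra ℂ A]
    [StarModule ℂ A] [CompleteSpace A]
    (φ : Dalg X →⋆ₙₐ[ℂ] A) (t : List 𝔞 → A)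
    (hmul : ∀ u v : List 𝔞, t u * t v = t (u ++ v))
    (hrep : ∀ u v : List 𝔞,
      φ ⟨chi X (cyl X u v), chi_cyl_mem_Dalg X u v⟩ = t v * star (t u) * (t u * star (t v)))
    (hlam : ∀ (w : List 𝔞) (f : Linf X), f ∈ Dalg X → lambdaMap X w f ∈ Dalg X)
    (w : List 𝔞) (f : Dalg X) :
    φ ⟨lambdaMap X w (f : Linf X), hlam w f f.2⟩ = star (t w) * φ f * t w ∧
    star (t w) * φ f = φ ⟨lambdaMap X w (f : Linf X), hlam w f f.2⟩ * star (t w) :=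
  rep_lambdaMap_general X hXinv φ t hmul hrep hlam w f
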